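/- Algorithm 2 solves SUIR in FSYNC with rigid movements and common coordinate system: for any initial positions a < b on the line and any crash pattern (left crashed, right crashed, or no crash), the robots reach a common point in finitely many rounds and stay there. -/

import Mathlib

/-! A crashed robot is a fixed target: while the distance to it exceeds 1 the correct robot
halves it, and from distance at most 1 it reaches the target in two rounds (possibly by first
overshooting to distance exactly 1 on the far side). Without a crash, one round ends either at
the common midpoint or with the robots swapped across at distance greater than 1, and the next
round sends both to the same midpoint. A gathered pair is a fixed point of every rule. -/

/-- Destination computed by Algorithm 2 for a robot at `x` seeing the other at `y`
(common coordinate system, unit distance 1): if the distance exceeds 1, go to the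
midpoint; otherwise the right robot goes to the other's position and the left robot
goes to the point at distance 1 to the right of the other; if gathered, stay. -/
noncomputable def dest2 (x y : ℝ) : ℝ :=
  if 1 < |y - x| then (x + y) / 2
  else if x < y then y + 1
  else if y < x then y
  else x

section Dest2

variable {x y : ℝ}

lemma dest2_self (x : ℝ) : dest2 x x = x := by simp [dest2]

lemma dest2_of_one_lt_abs (h : 1 < |y - x|) : dest2 x y = (x + y) / 2 := by
  rw [dest2, if_pos h]

lemma dest2_of_lt (h : |y - x| ≤ 1) (hxy : x < y) : dest2 x y = y + 1 := by
  rw [dest2, if_neg h.not_gt, if_pos hxy]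

lemma dest2_of_gt (h : |y - x| ≤ 1) (hyx : y < x) : dest2 x y = y := by
  rw [dest2, if_neg h.not_gt, if_neg hyx.not_gt, if_pos hyx]

lemma dest2_comm_of_one_lt_abs (h : 1 < |y - x|) : dest2 x y = dest2 y x := by
  rw [dest2_of_one_lt_abs h, dest2_of_one_lt_abs (by rwa [abs_sub_comm]), add_comm]

lemma dest2_dest2_of_abs_le_one (h : |y - x| ≤ 1) : dest2 (dest2 x y) y = y := by
  rcases lt_trichotomy x y with hxy | rfl | hyx
  · rw [dest2_of_lt h hxy, dest2_of_gt (by norm_num) (lt_add_one y)]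
  · rw [dest2_self, dest2_self]
  · rw [dest2_of_gt h hyx, dest2_self]

lemma dest2_dest2_comm (x y : ℝ) :
    dest2 (dest2 x y) (dest2 y x) = dest2 (dest2 y x) (dest2 x y) := by
  wlog hxy : x ≤ y generalizing x y
  · exact (this y x (le_of_not_ge hxy)).symm
  rcases hxy.eq_or_lt with rfl | hxy
  · rfl
  by_cases hfar : 1 < |y - x|
  · rw [dest2_comm_of_one_lt_abs hfar]
  · have hnear : |y - x| ≤ 1 := le_of_not_gt hfar
    rw [dest2_of_lt hnear hxy, dest2_of_gt (by rwa [abs_sub_comm]) hxy]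
    refine dest2_comm_of_one_lt_abs ?_
    rw [abs_of_neg (by linarith)]
    linarith

end Dest2

section Chase

variable {s : ℝ} {r : ℕ → ℝ}

lemma exists_abs_sub_le_one_of_chase (hr : ∀ n, r (n + 1) = dest2 (r n) s) :
    ∃ m, |s - r m| ≤ 1 := by
  by_contra! hfar
  have halve : ∀ n, |s - r n| = |s - r 0| / 2 ^ n := by
    intro n
    induction n with
    | zero => simp
    | succ n ih =>
      rw [hr n, dest2_of_one_lt_abs (hfar n), pow_succ, ← div_div, ← ih,
        show s - (r n + s) / 2 = (s - r n) / 2 by ring, abs_div, abs_two]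
  obtain ⟨n, hn⟩ := pow_unbounded_of_one_lt |s - r 0| one_lt_two
  have := hfar n
  rw [halve n, one_lt_div (by positivity)] at this
  exact this.not_gt hn

lemma exists_eq_of_chase (hr : ∀ n, r (n + 1) = dest2 (r n) s) : ∃ N, r N = s := by
  obtain ⟨m, hm⟩ := exists_abs_sub_le_one_of_chase hr
  exact ⟨m + 2, by rw [hr, hr, dest2_dest2_of_abs_le_one hm]⟩

end Chase

lemma eventually_gathered_of_gathered {p q : ℕ → ℝ}
    (hstep : ∀ n c, p n = c → q n = c → p (n + 1) = c ∧ q (n + 1) = c)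
    {N : ℕ} {c : ℝ} (hN : p N = c ∧ q N = c) : ∀ n, N ≤ n → p n = c ∧ q n = c := by
  intro n hn
  induction n, hn using Nat.le_induction with
  | base => exact hN
  | succ n _ ih => exact hstep n c ih.1 ih.2

lemma apply_eq_apply_zero_of_succ_eq {α : Type*} {f : ℕ → α} (hf : ∀ n, f (n + 1) = f n) (n : ℕ) :
    f n = f 0 := by
  induction n with
  | zero => rfl
  | succ n ih => rw [hf, ih]

theorem algo2_solves_SUIR_general
    (activeL activeR : Bool) (hactive : activeL = true ∨ activeR = true)
    (p q : ℕ → ℝ)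
    (hp : ∀ n, p (n + 1) = if activeL then dest2 (p n) (q n) else p n)
    (hq : ∀ n, q (n + 1) = if activeR then dest2 (q n) (p n) else q n) :
    ∃ (N : ℕ) (c : ℝ), ∀ n, N ≤ n → p n = c ∧ q n = c := by
  have hstep : ∀ n c, p n = c → q n = c → p (n + 1) = c ∧ q (n + 1) = c := by
    rintro n c rfl hqn
    simp only [hp, hq, hqn, dest2_self, ite_self, and_self]
  suffices ∃ N c, p N = c ∧ q N = c by
    obtain ⟨N, c, hN⟩ := this
    exact ⟨N, c, eventually_gathered_of_gathered hstep hN⟩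
  cases activeL <;> cases activeR <;> simp only [Bool.false_eq_true, if_true, if_false] at hp hq
  · simp at hactive
  · have hpc := apply_eq_apply_zero_of_succ_eq hp
    obtain ⟨N, hN⟩ := exists_eq_of_chase (s := p 0) (r := q) (by simpa only [hpc] using hq)
    exact ⟨N, p 0, hpc N, hN⟩
  · have hqc := apply_eq_apply_zero_of_succ_eq hq
    obtain ⟨N, hN⟩ := exists_eq_of_chase (s := q 0) (r := p) (by simpa only [hqc] using hp)
    exact ⟨N, q 0, hN, hqc N⟩
  · refine ⟨2, p 2, rfl, ?_⟩
    rw [hp, hq, hp, hq, dest2_dest2_comm]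

/-- Algorithm 2 solves SUIR in FSYNC with rigid movements and a common coordinate
system: for any initial positions `a < b` and any crash pattern (left crashed,
right crashed, or no crash), the robots reach a common point in finitely many
rounds and stay there. -/
theorem algo2_solves_SUIR (a b : ℝ) (hab : a < b)
    (activeL activeR : Bool) (hactive : activeL = true ∨ activeR = true)
    (p q : ℕ → ℝ) (hp0 : p 0 = a) (hq0 : q 0 = b)
    (hp : ∀ n, p (n + 1) = if activeL then dest2 (p n) (q n) else p n)
    (hq : ∀ n, q (n + 1) = if activeR then dest2 (q n) (p n) else q n) :
    ∃ (N : ℕ) (c : ℝ), ∀ n, N ≤ n → p n = c ∧ q n = c :=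
  algo2_solves_SUIR_general activeL activeR hactive p q hp hq
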